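/- Let (α_n)_{n≥1} be a sequence of nonnegative reals with ∑_{k=1}^n log(1+α_k) ≤ d' · log(n+1) for all n ≥ 1 and some constant d' > 0. Fix β ∈ (0,1) and γ > 1/β, and let E_β = {n : α_n > n^{-β}}. Then the set F_{β,γ} = {n ∈ ℕ : every integer k with n^γ ≤ k ≤ (n+1)^γ lies in E_β} has natural density zero. -/

import Mathlib

/-!
For `m ∈ F_{β,γ}` every integer `k ∈ [m^γ, (m+1)^γ)` has `log (1 + α k) ≥ k^{-β}/2 ≥ (2m)^{-γβ}/2`,
and for large `m` there are at least `γ m^{γ-1}/2` such `k`, so this block contributes at least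
`c m^e` to `∑ log (1 + α k)`, where `e = γ(1-β) - 1 > -1`. The blocks are disjoint and those with
`m ≤ n` lie in `[1, (n+1)^γ]`, so by hypothesis the contributions of `m ≤ n` add up to `O(log n)`.
Each of them is at least `c n^{min e 0}`, hence `#(F ∩ [1,n]) = O(n^{-min e 0} log n) = o(n)`.
-/

open Filter Finset Real Topology Function
open scoped Classical

theorem half_le_log_one_add {x : ℝ} (h0 : 0 ≤ x) (h1 : x ≤ 1) : x / 2 ≤ log (1 + x) := by
  have h := one_sub_inv_le_log_of_pos (by linarith : (0 : ℝ) < 1 + x)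
  have hx : x / 2 ≤ 1 - (1 + x)⁻¹ := by
    rw [le_sub_iff_add_le, ← le_sub_iff_add_le', inv_le_iff_one_le_mul₀ (by linarith)]
    nlinarith
  linarith

theorem rpow_add_mul_rpow_sub_one_le_add_one_rpow {x γ : ℝ} (hx : 0 < x) (hγ : 1 ≤ γ) :
    x ^ γ + γ * x ^ (γ - 1) ≤ (x + 1) ^ γ :=
  calc x ^ γ + γ * x ^ (γ - 1) = x ^ γ * (1 + γ * x⁻¹) := by
        rw [rpow_sub hx, rpow_one]; field_simp
    _ ≤ x ^ γ * (1 + x⁻¹) ^ γ := by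
        gcongr; exact one_add_mul_self_le_rpow_one_add (by linarith [inv_pos.2 hx]) hγ
    _ = (x + 1) ^ γ := by
        rw [← mul_rpow hx.le (by positivity), mul_add, mul_one, mul_inv_cancel₀ hx.ne']

theorem tendsto_log_add_one_div_rpow_atTop {s : ℝ} (hs : 0 < s) :
    Tendsto (fun n : ℕ => log (n + 1) / (n : ℝ) ^ s) atTop (𝓝 0) := by
  have hdiff := tendsto_log_nat_add_one_sub_log.mul
    ((tendsto_rpow_neg_atTop hs).comp tendsto_natCast_atTop_atTop)
  have hlog := (isLittleO_log_rpow_atTop hs).tendsto_div_nhds_zero.comp tendsto_natCast_atTop_atTop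
  rw [zero_mul] at hdiff
  refine (zero_add (0 : ℝ) ▸ hdiff.add hlog).congr fun n => ?_
  simp only [Function.comp_apply, rpow_neg n.cast_nonneg]
  ring

noncomputable def rpowBlock (γ : ℝ) (m : ℕ) : Finset ℕ :=
  Ico ⌈(m : ℝ) ^ γ⌉₊ ⌈((m : ℝ) + 1) ^ γ⌉₊

theorem mem_rpowBlock {γ : ℝ} {m k : ℕ} :
    k ∈ rpowBlock γ m ↔ (m : ℝ) ^ γ ≤ k ∧ (k : ℝ) < ((m : ℝ) + 1) ^ γ := by
  rw [rpowBlock, mem_Ico, Nat.ceil_le, Nat.lt_ceil]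

theorem rpowBlock_pairwiseDisjoint {γ : ℝ} (hγ : 0 ≤ γ) :
    Pairwise (Disjoint on (rpowBlock γ)) := by
  refine pairwise_disjoint_on _ |>.2 fun p q hpq => disjoint_left.2 fun k hp hq => ?_
  rw [mem_rpowBlock] at hp hq
  have : ((p : ℝ) + 1) ^ γ ≤ (q : ℝ) ^ γ :=
    rpow_le_rpow (by positivity) (by exact_mod_cast hpq) hγ
  linarith [hp.2, hq.1]

theorem rpowBlock_subset_Icc {γ : ℝ} (hγ : 0 ≤ γ) {m n : ℕ} (hm : 1 ≤ m) (hmn : m ≤ n) :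
    rpowBlock γ m ⊆ Icc 1 ⌈((n : ℝ) + 1) ^ γ⌉₊ := by
  intro k hk
  rw [mem_rpowBlock] at hk
  have hk1 : (1 : ℝ) ≤ k := (one_le_rpow (by exact_mod_cast hm) hγ).trans hk.1
  have hkn : (k : ℝ) ≤ ((n : ℝ) + 1) ^ γ :=
    hk.2.le.trans (rpow_le_rpow (by positivity) (by gcongr) hγ)
  exact mem_Icc.2 ⟨by exact_mod_cast hk1, by exact_mod_cast hkn.trans (Nat.le_ceil _)⟩

theorem sub_sub_one_le_card_rpowBlock {γ : ℝ} (hγ : 0 ≤ γ) (m : ℕ) :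
    ((m : ℝ) + 1) ^ γ - (m : ℝ) ^ γ - 1 ≤ #(rpowBlock γ m) := by
  have hle : ⌈(m : ℝ) ^ γ⌉₊ ≤ ⌈((m : ℝ) + 1) ^ γ⌉₊ :=
    Nat.ceil_le_ceil (rpow_le_rpow (by positivity) (by linarith) hγ)
  rw [rpowBlock, Nat.card_Ico, Nat.cast_sub hle]
  linarith [Nat.le_ceil (((m : ℝ) + 1) ^ γ), Nat.ceil_lt_add_one (by positivity : 0 ≤ (m : ℝ) ^ γ)]

theorem eventually_le_card_rpowBlock {γ : ℝ} (hγ : 1 < γ) :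
    ∀ᶠ m : ℕ in atTop, γ / 2 * (m : ℝ) ^ (γ - 1) ≤ #(rpowBlock γ m) := by
  have hlarge := ((tendsto_rpow_atTop (sub_pos.2 hγ)).comp
    tendsto_natCast_atTop_atTop).eventually_ge_atTop (2 / γ)
  filter_upwards [hlarge, eventually_ge_atTop 1] with m hlarge hm
  have hγm : 2 ≤ γ * (m : ℝ) ^ (γ - 1) := by
    rwa [Function.comp_apply, div_le_iff₀' (by linarith)] at hlarge
  linarith [sub_sub_one_le_card_rpowBlock (zero_le_one.trans hγ.le) m,
    rpow_add_mul_rpow_sub_one_le_add_one_rpow (by exact_mod_cast hm : (0 : ℝ) < m) hγ.le]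

theorem two_rpow_mul_rpow_div_two_le_log_one_add {β γ : ℝ} (hβ : 0 ≤ β) (hγ : 0 ≤ γ)
    {m k : ℕ} (hm : 1 ≤ m) (hk : k ∈ rpowBlock γ m) {a : ℝ} (ha : (k : ℝ) ^ (-β) < a) :
    (2 : ℝ) ^ (-(γ * β)) * (m : ℝ) ^ (-(γ * β)) / 2 ≤ log (1 + a) := by
  rw [mem_rpowBlock] at hk
  have hm' : (1 : ℝ) ≤ m := by exact_mod_cast hm
  have hk1 : (1 : ℝ) ≤ k := (one_le_rpow hm' hγ).trans hk.1
  have hk2m : (k : ℝ) ≤ (2 * (m : ℝ)) ^ γ :=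
    hk.2.le.trans (rpow_le_rpow (by positivity) (by linarith) hγ)
  calc (2 : ℝ) ^ (-(γ * β)) * (m : ℝ) ^ (-(γ * β)) / 2 = ((2 * (m : ℝ)) ^ γ) ^ (-β) / 2 := by
        rw [← rpow_mul (by positivity), mul_rpow (by norm_num) (by positivity), mul_neg]
    _ ≤ (k : ℝ) ^ (-β) / 2 := by
        gcongr ?_ / 2
        exact rpow_le_rpow_of_nonpos (by positivity) hk2m (by linarith)
    _ ≤ log (1 + (k : ℝ) ^ (-β)) :=
        half_le_log_one_add (by positivity) (rpow_le_one_of_one_le_of_nonpos hk1 (by linarith))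
    _ ≤ log (1 + a) := log_le_log (by positivity) (by linarith)

theorem eventually_mul_rpow_le_sum_log_one_add {β γ : ℝ} (hβ : 0 ≤ β) (hγ : 1 < γ) (a : ℕ → ℝ) :
    ∀ᶠ m : ℕ in atTop, (∀ k ∈ rpowBlock γ m, (k : ℝ) ^ (-β) < a k) →
      γ / 4 * (2 : ℝ) ^ (-(γ * β)) * (m : ℝ) ^ (γ - 1 - γ * β) ≤
        ∑ k ∈ rpowBlock γ m, log (1 + a k) := by
  filter_upwards [eventually_le_card_rpowBlock hγ, eventually_ge_atTop 1] with m hcard hm ha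
  have hm' : (0 : ℝ) < m := by exact_mod_cast hm
  calc γ / 4 * (2 : ℝ) ^ (-(γ * β)) * (m : ℝ) ^ (γ - 1 - γ * β)
      = γ / 2 * (m : ℝ) ^ (γ - 1) * ((2 : ℝ) ^ (-(γ * β)) * (m : ℝ) ^ (-(γ * β)) / 2) := by
        rw [sub_eq_add_neg (γ - 1), rpow_add hm']; ring
    _ ≤ #(rpowBlock γ m) * ((2 : ℝ) ^ (-(γ * β)) * (m : ℝ) ^ (-(γ * β)) / 2) := by gcongr
    _ ≤ ∑ k ∈ rpowBlock γ m, log (1 + a k) := by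
        rw [← nsmul_eq_mul]
        exact card_nsmul_le_sum _ _ _ fun k hk =>
          two_rpow_mul_rpow_div_two_le_log_one_add hβ (by linarith) hm hk (ha k hk)

theorem sum_sum_rpowBlock_le {γ : ℝ} (hγ : 0 ≤ γ) {f : ℕ → ℝ} (hf : ∀ k, 0 ≤ f k)
    {s : Finset ℕ} {n : ℕ} (hs : s ⊆ Icc 1 n) :
    ∑ m ∈ s, ∑ k ∈ rpowBlock γ m, f k ≤ ∑ k ∈ Icc 1 ⌈((n : ℝ) + 1) ^ γ⌉₊, f k := by
  rw [← sum_biUnion ((rpowBlock_pairwiseDisjoint hγ).set_pairwise _)]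
  refine sum_le_sum_of_subset_of_nonneg (biUnion_subset.2 fun m hm => ?_) fun k _ _ => hf k
  obtain ⟨hm1, hmn⟩ := mem_Icc.1 (hs hm)
  exact rpowBlock_subset_Icc hγ hm1 hmn

theorem log_ceil_rpow_add_one_le {γ : ℝ} (hγ : 1 ≤ γ) {n : ℕ} (hn : 1 ≤ n) :
    log (⌈((n : ℝ) + 1) ^ γ⌉₊ + 1) ≤ (γ + 1) * log ((n : ℝ) + 1) := by
  have hn' : (1 : ℝ) ≤ n := by exact_mod_cast hn
  have htwo : (2 : ℝ) ≤ ((n : ℝ) + 1) ^ γ :=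
    (self_le_rpow_of_one_le (by linarith) hγ).trans' (by linarith)
  have hceil : (⌈((n : ℝ) + 1) ^ γ⌉₊ : ℝ) < ((n : ℝ) + 1) ^ γ + 1 :=
    Nat.ceil_lt_add_one (by positivity)
  rw [← log_rpow (by positivity), rpow_add_one (by positivity)]
  exact log_le_log (by positivity) (by nlinarith)

theorem card_filter_Icc_le_add_sum_div {P : ℕ → Prop} [DecidablePred P] {b : ℕ → ℝ} {c e : ℝ}
    {m₀ n : ℕ} (hc : 0 < c) (hn : 1 ≤ n) (hb0 : ∀ m, 0 ≤ b m)
    (hb : ∀ m, m₀ ≤ m → P m → c * (m : ℝ) ^ e ≤ b m) :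
    (#((Icc 1 n).filter P) : ℝ) ≤
      m₀ + (∑ m ∈ (Icc 1 n).filter P, b m) / (c * (n : ℝ) ^ min e 0) := by
  set s := (Icc 1 n).filter P
  have hsmall : #(s.filter (¬ m₀ ≤ ·)) ≤ m₀ :=
    (card_le_card fun m hm => mem_range.2 (not_le.1 (mem_filter.1 hm).2)).trans
      (card_range m₀).le
  have hlarge : #(s.filter (m₀ ≤ ·)) * (c * (n : ℝ) ^ min e 0) ≤ ∑ m ∈ s, b m := by
    rw [← nsmul_eq_mul]
    refine (card_nsmul_le_sum _ _ _ fun m hm => ?_).trans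
      (sum_le_sum_of_subset_of_nonneg (filter_subset _ _) fun m _ _ => hb0 m)
    obtain ⟨⟨hmIcc, hPm⟩, hm₀⟩ := mem_filter.1 hm |>.imp_left mem_filter.1
    obtain ⟨hm1, hmn⟩ := mem_Icc.1 hmIcc
    have hm1' : (1 : ℝ) ≤ m := by exact_mod_cast hm1
    have hmn' : (m : ℝ) ≤ n := by exact_mod_cast hmn
    calc c * (n : ℝ) ^ min e 0 ≤ c * (m : ℝ) ^ min e 0 := mul_le_mul_of_nonneg_left
          (rpow_le_rpow_of_nonpos (by positivity) hmn' (min_le_right _ _)) hc.le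
      _ ≤ c * (m : ℝ) ^ e := mul_le_mul_of_nonneg_left
          (rpow_le_rpow_of_exponent_le hm1' (min_le_left _ _)) hc.le
      _ ≤ b m := hb m hm₀ hPm
  have hpos : 0 < c * (n : ℝ) ^ min e 0 := by
    have : (0 : ℝ) < n := by exact_mod_cast hn
    positivity
  rw [← card_filter_add_card_filter_not (m₀ ≤ ·), Nat.cast_add, add_comm]
  exact add_le_add (by exact_mod_cast hsmall) ((le_div_iff₀ hpos).2 hlarge)

theorem tendsto_card_filter_Icc_div_atTop_zero {P : ℕ → Prop} [DecidablePred P] {b : ℕ → ℝ}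
    {c C e : ℝ} (hc : 0 < c) (he : -1 < e) (hb0 : ∀ m, 0 ≤ b m)
    (hb : ∀ᶠ m in atTop, P m → c * (m : ℝ) ^ e ≤ b m)
    (hsum : ∀ᶠ n in atTop, ∑ m ∈ (Icc 1 n).filter P, b m ≤ C * log (n + 1)) :
    Tendsto (fun n : ℕ => (#((Icc 1 n).filter P) : ℝ) / n) atTop (𝓝 0) := by
  obtain ⟨m₀, hm₀⟩ := eventually_atTop.1 hb
  have hbound : ∀ᶠ n : ℕ in atTop, (#((Icc 1 n).filter P) : ℝ) / n ≤
      m₀ / n + C / c * (log (n + 1) / (n : ℝ) ^ (1 + min e 0)) := by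
    filter_upwards [hsum, eventually_ge_atTop 1] with n hsum hn
    have hn' : (0 : ℝ) < n := by exact_mod_cast hn
    have hcard := card_filter_Icc_le_add_sum_div hc hn hb0 hm₀
    calc (#((Icc 1 n).filter P) : ℝ) / n
        ≤ (m₀ + C * log (n + 1) / (c * (n : ℝ) ^ min e 0)) / n := by
          gcongr
          exact hcard.trans (by gcongr)
      _ = m₀ / n + C / c * (log (n + 1) / (n : ℝ) ^ (1 + min e 0)) := by
          rw [rpow_add hn', rpow_one]; field_simp
  have hs : 0 < 1 + min e 0 := by linarith [lt_min he neg_one_lt_zero]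
  have hlim := (tendsto_const_div_atTop_nhds_zero_nat (m₀ : ℝ)).add
    ((tendsto_log_add_one_div_rpow_atTop hs).const_mul (C / c))
  rw [mul_zero, add_zero] at hlim
  exact squeeze_zero' (Eventually.of_forall fun n => by positivity) hbound hlim

/-- Under the logarithmic growth bound on `∑ log(1+α_k)`, for `β ∈ (0,1)` and `γ > 1/β`,
the set `F_{β,γ}` of `n` such that every integer `k` with `n^γ ≤ k ≤ (n+1)^γ` lies in
`E_β = {k : α_k > k^{-β}}` has natural density zero. -/
theorem density_zero_of_gap_set
    (α : ℕ → ℝ) (hα : ∀ n, 0 ≤ α n) (d' : ℝ) (hd' : 0 < d')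
    (hsum : ∀ n : ℕ, 1 ≤ n →
      ∑ k ∈ Finset.Icc 1 n, Real.log (1 + α k) ≤ d' * Real.log (n + 1))
    (β γ : ℝ) (hβ : β ∈ Set.Ioo (0 : ℝ) 1) (hγ : 1 / β < γ) :
    Tendsto (fun n : ℕ =>
        (((Finset.Icc 1 n).filter (fun m =>
            ∀ k : ℕ, (m : ℝ) ^ γ ≤ k → (k : ℝ) ≤ ((m : ℝ) + 1) ^ γ →
              (k : ℝ) ^ (-β) < α k)).card : ℝ) / n)
      atTop (nhds 0) := by
  obtain ⟨hβ0, hβ1⟩ := hβ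
  have hγ1 : 1 < γ := (one_lt_one_div hβ0 hβ1).trans hγ
  have hlog : ∀ k, 0 ≤ log (1 + α k) := fun k => log_nonneg (by linarith [hα k])
  -- the ascription `(m : ℝ)` makes the filter run over the image of `Icc 1 n` in `ℝ`
  simp only [bind_pure_comp, fmap_def, filter_image, card_image_of_injective _ Nat.cast_injective]
  refine tendsto_card_filter_Icc_div_atTop_zero (b := fun m => ∑ k ∈ rpowBlock γ m, log (1 + α k))
    (c := γ / 4 * 2 ^ (-(γ * β))) (C := d' * (γ + 1)) (e := γ - 1 - γ * β) (by positivity)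
    (by nlinarith [mul_pos (by linarith : 0 < γ) (sub_pos.2 hβ1)])
    (fun m => sum_nonneg fun k _ => hlog k) ?_ ?_
  · filter_upwards [eventually_mul_rpow_le_sum_log_one_add hβ0.le hγ1 α] with m hm hP
    exact hm fun k hk => hP k (mem_rpowBlock.1 hk).1 (mem_rpowBlock.1 hk).2.le
  · filter_upwards [eventually_ge_atTop 1] with n hn
    calc _ ≤ ∑ k ∈ Icc 1 ⌈((n : ℝ) + 1) ^ γ⌉₊, log (1 + α k) :=
          sum_sum_rpowBlock_le (by linarith) hlog (filter_subset _ _)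
      _ ≤ d' * log (⌈((n : ℝ) + 1) ^ γ⌉₊ + 1) :=
          hsum _ (Nat.one_le_ceil_iff.2 (by positivity))
      _ ≤ d' * ((γ + 1) * log (n + 1)) := by gcongr; exact log_ceil_rpow_add_one_le hγ1.le hn
      _ = d' * (γ + 1) * log (n + 1) := by ring
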